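/- arXiv:2605.11239 — 6 statements merged into one kernel-verified Lean document; each statement's English description precedes it below -/
import Mathlib

section
/- The unique minimizer θ̂* of L̂_D satisfies θ̂* = θ' + J(X)ᵀ α*, where α* := −(1/λ) ∇_{f^lin(X, θ̂*)} L̂_D ∈ ℝ^{d_out·n} is −(1/λ) times the gradient of the loss part of L̂_D with respect to the stacked linearized model outputs at all training points, evaluated at θ̂*. -/
open Finset Matrix

noncomputable section

/-- Squared ℓ₂ norm of a finitely-indexed real vector. -/
def sqnorm {ι : Type*} [Fintype ι] (v : ι → ℝ) : ℝ := ∑ i, v i ^ 2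

/-- The linearized model `f^lin(x, θ) = f(x, θ') + J(x)(θ - θ')`, where `f0 x = f(x, θ')`
and `J x` is the Jacobian of `f(x, ·)` at `θ'`. -/
def flin {din dout dθ : ℕ}
    (f0 : (Fin din → ℝ) → Fin dout → ℝ)
    (J : (Fin din → ℝ) → Matrix (Fin dout) (Fin dθ) ℝ)
    (θ' : Fin dθ → ℝ) (xt : Fin din → ℝ) (θ : Fin dθ → ℝ) : Fin dout → ℝ :=
  f0 xt + J xt *ᵥ (θ - θ')

/-- Regularized empirical risk `L̂_S(θ)` of the linearized model over the subset of the
dataset indexed by `S`. -/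
def empRisk {din dout dθ n : ℕ}
    (f0 : (Fin din → ℝ) → Fin dout → ℝ)
    (J : (Fin din → ℝ) → Matrix (Fin dout) (Fin dθ) ℝ)
    (θ' : Fin dθ → ℝ) (X : Fin n → Fin din → ℝ) (Y : Fin n → Fin dout → ℝ)
    (ℓ : (Fin dout → ℝ) → (Fin dout → ℝ) → ℝ) (lam : ℝ)
    (S : Finset (Fin n)) (θ : Fin dθ → ℝ) : ℝ :=
  (S.card : ℝ)⁻¹ * ∑ i ∈ S, (ℓ (flin f0 J θ' (X i) θ) (Y i) + lam / 2 * sqnorm (θ - θ'))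

/-- Gradient of the loss `ℓ(·, y)` in its first argument, as a vector. -/
def gradloss {dout : ℕ} (ℓ : (Fin dout → ℝ) → (Fin dout → ℝ) → ℝ)
    (ytgt u : Fin dout → ℝ) : Fin dout → ℝ :=
  fun a => fderiv ℝ (fun v => ℓ v ytgt) u (Pi.single a 1)

/-- Hessian of the loss `ℓ(·, y)` in its first argument, as a matrix. -/
def hessloss {dout : ℕ} (ℓ : (Fin dout → ℝ) → (Fin dout → ℝ) → ℝ)
    (ytgt u : Fin dout → ℝ) : Fin dout → Fin dout → ℝ :=
  fun a b => fderiv ℝ (fun v => fderiv ℝ (fun w => ℓ w ytgt) v (Pi.single b 1)) u (Pi.single a 1)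

/-- Stacked Jacobian `J(X) ∈ ℝ^{d_out·n × d_θ}`, whose `i`-th row block is `J(x_i)`. -/
def JX {din dout dθ n : ℕ}
    (J : (Fin din → ℝ) → Matrix (Fin dout) (Fin dθ) ℝ)
    (X : Fin n → Fin din → ℝ) : Matrix (Fin n × Fin dout) (Fin dθ) ℝ :=
  fun q p => J (X q.1) q.2 p

/-- Empirical NTK Gram matrix `K = K(X, X) = J(X) J(X)ᵀ`. -/
def Kmat {din dout dθ n : ℕ}
    (J : (Fin din → ℝ) → Matrix (Fin dout) (Fin dθ) ℝ)
    (X : Fin n → Fin din → ℝ) : Matrix (Fin n × Fin dout) (Fin n × Fin dout) ℝ :=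
  JX J X * (JX J X)ᵀ

/-- NTK row block `K(x, X) = J(x) J(X)ᵀ ∈ ℝ^{d_out × d_out·n}`. -/
def KxX {din dout dθ n : ℕ}
    (J : (Fin din → ℝ) → Matrix (Fin dout) (Fin dθ) ℝ)
    (X : Fin n → Fin din → ℝ) (xt : Fin din → ℝ) : Matrix (Fin dout) (Fin n × Fin dout) ℝ :=
  J xt * (JX J X)ᵀ

/-- Reparameterization `φ(Δα) = θ̂* + J(X)ᵀ Δα`. -/
def phi {din dout dθ n : ℕ}
    (J : (Fin din → ℝ) → Matrix (Fin dout) (Fin dθ) ℝ)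
    (X : Fin n → Fin din → ℝ) (θstar : Fin dθ → ℝ)
    (Δα : Fin n × Fin dout → ℝ) : Fin dθ → ℝ :=
  θstar + (JX J X)ᵀ *ᵥ Δα

/-- Reparameterized model `g^lin(x, Δα) = f^lin(x, θ̂*) + K(x, X) Δα`. -/
def glin {din dout dθ n : ℕ}
    (f0 : (Fin din → ℝ) → Fin dout → ℝ)
    (J : (Fin din → ℝ) → Matrix (Fin dout) (Fin dθ) ℝ)
    (θ' : Fin dθ → ℝ) (X : Fin n → Fin din → ℝ) (θstar : Fin dθ → ℝ)
    (xt : Fin din → ℝ) (Δα : Fin n × Fin dout → ℝ) : Fin dout → ℝ :=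
  flin f0 J θ' xt θstar + KxX J X xt *ᵥ Δα

/-- Dual risk `L̃_S(Δα) = (1/|S|) Σ_{(x,y)∈S} ( ℓ(g^lin(x, Δα), y) + (λ/2)‖φ(Δα) − θ'‖₂² )`. -/
def dualRisk {din dout dθ n : ℕ}
    (f0 : (Fin din → ℝ) → Fin dout → ℝ)
    (J : (Fin din → ℝ) → Matrix (Fin dout) (Fin dθ) ℝ)
    (θ' : Fin dθ → ℝ) (X : Fin n → Fin din → ℝ) (Y : Fin n → Fin dout → ℝ)
    (ℓ : (Fin dout → ℝ) → (Fin dout → ℝ) → ℝ) (lam : ℝ) (θstar : Fin dθ → ℝ)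
    (S : Finset (Fin n)) (Δα : Fin n × Fin dout → ℝ) : ℝ :=
  (S.card : ℝ)⁻¹ *
    ∑ i ∈ S, (ℓ (glin f0 J θ' X θstar (X i) Δα) (Y i) +
      lam / 2 * sqnorm (phi J X θstar Δα - θ'))

/-- The dual coefficient vector `Δα_r*` of Proposition 3.1: on the forget indices
(`q.1 ∉ Dr`) it is `(1/λ) ∇_{f^lin(X_f, θ̂*)} L̂_D`, and on the retain indices (`q.1 ∈ Dr`)
it is `−(1/λ)( ∇_{f^lin(X_r, θ̂_r*)} L̂_{D_r} − ∇_{f^lin(X_r, θ̂*)} L̂_D )`. -/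
def dalpha {din dout dθ n : ℕ}
    (f0 : (Fin din → ℝ) → Fin dout → ℝ)
    (J : (Fin din → ℝ) → Matrix (Fin dout) (Fin dθ) ℝ)
    (θ' : Fin dθ → ℝ) (X : Fin n → Fin din → ℝ) (Y : Fin n → Fin dout → ℝ)
    (ℓ : (Fin dout → ℝ) → (Fin dout → ℝ) → ℝ) (lam : ℝ)
    (Dr : Finset (Fin n)) (θstar θrstar : Fin dθ → ℝ) :
    Fin n × Fin dout → ℝ :=
  fun q =>
    if q.1 ∈ Dr then
      -lam⁻¹ * ((Dr.card : ℝ)⁻¹ * gradloss ℓ (Y q.1) (flin f0 J θ' (X q.1) θrstar) q.2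
        - (n : ℝ)⁻¹ * gradloss ℓ (Y q.1) (flin f0 J θ' (X q.1) θstar) q.2)
    else
      lam⁻¹ * ((n : ℝ)⁻¹ * gradloss ℓ (Y q.1) (flin f0 J θ' (X q.1) θstar) q.2)

/-! The minimiser is a critical point, so every directional derivative of `L̂_D` at `θ̂*`
vanishes. Along `θ̂* + t • w` that derivative is `(J(X)ᵀ g + λ (θ̂* - θ')) ⬝ᵥ w`, where `g`
stacks the scaled loss gradients `∇ℓ / n`; hence `λ (θ̂* - θ') = -J(X)ᵀ g`. -/

lemma ContinuousLinearMap.apply_eq_dotProduct {ι : Type*} [Fintype ι] [DecidableEq ι]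
    (D : (ι → ℝ) →L[ℝ] ℝ) (w : ι → ℝ) :
    D w = (fun a => D (Pi.single a 1)) ⬝ᵥ w := by
  have hsingle (a : ι) : (Pi.single a 1 : ι → ℝ) = fun j => if a = j then 1 else 0 := by
    ext j
    simp [Pi.single_apply, eq_comm]
  simp only [hsingle, dotProduct, mul_comm]
  exact D.toLinearMap.pi_apply_eq_sum_univ w

lemma fderiv_loss_apply_eq_gradloss_dotProduct {dout : ℕ}
    (ℓ : (Fin dout → ℝ) → (Fin dout → ℝ) → ℝ) (ytgt u w : Fin dout → ℝ) :
    fderiv ℝ (fun v => ℓ v ytgt) u w = gradloss ℓ ytgt u ⬝ᵥ w :=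
  (fderiv ℝ (fun v => ℓ v ytgt) u).apply_eq_dotProduct w

lemma hasDerivAt_sqnorm_add_smul {ι : Type*} [Fintype ι] (v w : ι → ℝ) (t : ℝ) :
    HasDerivAt (fun s : ℝ => sqnorm (v + s • w)) (2 * ((v + t • w) ⬝ᵥ w)) t := by
  have h (a : ι) : HasDerivAt (fun s : ℝ => (v a + s * w a) ^ 2)
      (2 * ((v a + t * w a) * w a)) t := by
    refine ((((hasDerivAt_id t).mul_const (w a)).const_add (v a)).fun_pow 2).congr_deriv ?_
    simp only [id, Nat.cast_ofNat]
    ring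
  simpa [sqnorm, dotProduct, Finset.mul_sum] using
    HasDerivAt.fun_sum (u := Finset.univ) fun a _ => h a

lemma JX_dotProduct_mulVec {din dout dθ n : ℕ}
    (J : (Fin din → ℝ) → Matrix (Fin dout) (Fin dθ) ℝ) (X : Fin n → Fin din → ℝ)
    (G : Fin n × Fin dout → ℝ) (w : Fin dθ → ℝ) :
    G ⬝ᵥ (JX J X *ᵥ w) = ∑ i, (fun a => G (i, a)) ⬝ᵥ (J (X i) *ᵥ w) := by
  simp only [dotProduct, Fintype.sum_prod_type]
  rfl

section LinearizedRisk

variable {din dout dθ n : ℕ} (f0 : (Fin din → ℝ) → Fin dout → ℝ)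
  (J : (Fin din → ℝ) → Matrix (Fin dout) (Fin dθ) ℝ) (θ' : Fin dθ → ℝ)
  (X : Fin n → Fin din → ℝ) (Y : Fin n → Fin dout → ℝ)

lemma hasDerivAt_flin_add_smul (x : Fin din → ℝ) (θ w : Fin dθ → ℝ) (t : ℝ) :
    HasDerivAt (fun s : ℝ => flin f0 J θ' x (θ + s • w)) (J x *ᵥ w) t := by
  have hline : (fun s : ℝ => flin f0 J θ' x (θ + s • w)) =
      fun s => flin f0 J θ' x θ + s • (J x *ᵥ w) := by
    funext s
    simp only [flin, add_sub_right_comm θ, mulVec_add, mulVec_smul, add_assoc]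
  rw [hline]
  simpa using ((hasDerivAt_id t).smul_const (J x *ᵥ w)).const_add (flin f0 J θ' x θ)

variable {ℓ : (Fin dout → ℝ) → (Fin dout → ℝ) → ℝ}

lemma hasDerivAt_loss_flin_add_smul (hdiff : ∀ ytgt, Differentiable ℝ fun u => ℓ u ytgt)
    (x : Fin din → ℝ) (ytgt : Fin dout → ℝ) (θ w : Fin dθ → ℝ) :
    HasDerivAt (fun s : ℝ => ℓ (flin f0 J θ' x (θ + s • w)) ytgt)
      (gradloss ℓ ytgt (flin f0 J θ' x θ) ⬝ᵥ (J x *ᵥ w)) 0 := by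
  have h := ((hdiff ytgt) (flin f0 J θ' x θ)).hasFDerivAt.comp_hasDerivAt_of_eq (0 : ℝ)
    (hasDerivAt_flin_add_smul f0 J θ' x θ w 0) (by simp)
  rwa [fderiv_loss_apply_eq_gradloss_dotProduct] at h

variable (lam : ℝ)

lemma hasDerivAt_empRisk_add_smul (hdiff : ∀ ytgt, Differentiable ℝ fun u => ℓ u ytgt)
    (S : Finset (Fin n)) (θ w : Fin dθ → ℝ) :
    HasDerivAt (fun s : ℝ => empRisk f0 J θ' X Y ℓ lam S (θ + s • w))
      ((S.card : ℝ)⁻¹ * ∑ i ∈ S, (gradloss ℓ (Y i) (flin f0 J θ' (X i) θ) ⬝ᵥ (J (X i) *ᵥ w)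
        + lam * ((θ - θ') ⬝ᵥ w))) 0 := by
  have hreg : HasDerivAt (fun s : ℝ => lam / 2 * sqnorm (θ + s • w - θ'))
      (lam * ((θ - θ') ⬝ᵥ w)) 0 := by
    have h := (hasDerivAt_sqnorm_add_smul (θ - θ') w 0).const_mul (lam / 2)
    simp only [zero_smul, add_zero, ← add_sub_right_comm θ] at h
    exact h.congr_deriv (by ring)
  exact (HasDerivAt.fun_sum fun i _ =>
    (hasDerivAt_loss_flin_add_smul f0 J θ' hdiff (X i) (Y i) θ w).add hreg).const_mul _

variable (ℓ) in
def empRiskGrad (θ : Fin dθ → ℝ) : Fin dθ → ℝ :=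
  (JX J X)ᵀ *ᵥ (fun q => (n : ℝ)⁻¹ * gradloss ℓ (Y q.1) (flin f0 J θ' (X q.1) θ) q.2)
    + lam • (θ - θ')

lemma hasDerivAt_empRisk_univ_add_smul (hn : 0 < n)
    (hdiff : ∀ ytgt, Differentiable ℝ fun u => ℓ u ytgt) (θ w : Fin dθ → ℝ) :
    HasDerivAt (fun s : ℝ => empRisk f0 J θ' X Y ℓ lam Finset.univ (θ + s • w))
      (empRiskGrad f0 J θ' X Y ℓ lam θ ⬝ᵥ w) 0 := by
  refine (hasDerivAt_empRisk_add_smul f0 J θ' X Y lam hdiff univ θ w).congr_deriv ?_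
  have hn' : (n : ℝ) ≠ 0 := Nat.cast_ne_zero.mpr hn.ne'
  rw [empRiskGrad, add_dotProduct, mulVec_transpose, ← dotProduct_mulVec, JX_dotProduct_mulVec,
    Finset.sum_add_distrib, Finset.sum_const, card_univ, Fintype.card_fin, nsmul_eq_mul,
    smul_dotProduct, smul_eq_mul, mul_add, Finset.mul_sum]
  congr 1
  · refine Finset.sum_congr rfl fun i _ => ?_
    simp only [dotProduct, Finset.mul_sum, mul_assoc]
  · field_simp

lemma empRiskGrad_eq_zero_of_forall_le (hn : 0 < n)
    (hdiff : ∀ ytgt, Differentiable ℝ fun u => ℓ u ytgt) (θstar : Fin dθ → ℝ)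
    (hmin : ∀ θ, empRisk f0 J θ' X Y ℓ lam univ θstar ≤ empRisk f0 J θ' X Y ℓ lam univ θ) :
    empRiskGrad f0 J θ' X Y ℓ lam θstar = 0 := by
  funext p
  have hline : IsLocalMin
      (fun s : ℝ => empRisk f0 J θ' X Y ℓ lam univ (θstar + s • Pi.single p 1)) 0 :=
    Filter.Eventually.of_forall fun s => by simpa using hmin _
  simpa using hline.hasDerivAt_eq_zero
    (hasDerivAt_empRisk_univ_add_smul f0 J θ' X Y lam hn hdiff θstar (Pi.single p 1))

end LinearizedRisk

theorem stmt_1_general {din dout dθ n : ℕ} (hn : 0 < n)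
    (f0 : (Fin din → ℝ) → Fin dout → ℝ)
    (J : (Fin din → ℝ) → Matrix (Fin dout) (Fin dθ) ℝ)
    (θ' : Fin dθ → ℝ) (X : Fin n → Fin din → ℝ) (Y : Fin n → Fin dout → ℝ)
    (ℓ : (Fin dout → ℝ) → (Fin dout → ℝ) → ℝ) (lam : ℝ)
    (hdiff : ∀ ytgt, Differentiable ℝ fun u => ℓ u ytgt)
    (hlam : 0 < lam)
    (θstar : Fin dθ → ℝ)
    (hmin : ∀ θ : Fin dθ → ℝ,
      empRisk f0 J θ' X Y ℓ lam Finset.univ θstar ≤ empRisk f0 J θ' X Y ℓ lam Finset.univ θ) :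
    θstar = θ' + (JX J X)ᵀ *ᵥ (fun q : Fin n × Fin dout =>
      -lam⁻¹ * ((n : ℝ)⁻¹ * gradloss ℓ (Y q.1) (flin f0 J θ' (X q.1) θstar) q.2)) := by
  have hcrit := empRiskGrad_eq_zero_of_forall_le f0 J θ' X Y lam hn hdiff θstar hmin
  rw [empRiskGrad, add_eq_zero_iff_neg_eq] at hcrit
  rw [show (fun q : Fin n × Fin dout =>
      -lam⁻¹ * ((n : ℝ)⁻¹ * gradloss ℓ (Y q.1) (flin f0 J θ' (X q.1) θstar) q.2)) =
      (-lam⁻¹) • fun q => (n : ℝ)⁻¹ * gradloss ℓ (Y q.1) (flin f0 J θ' (X q.1) θstar) q.2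
      from rfl, mulVec_smul, neg_smul, ← smul_neg, hcrit, smul_smul,
    inv_mul_cancel₀ hlam.ne', one_smul, add_sub_cancel]

/-- the unique minimizer `θ̂*` of `L̂_D` satisfies
`θ̂* = θ' + J(X)ᵀ α*` with `α* = −(1/λ) ∇_{f^lin(X, θ̂*)} L̂_D`. -/
theorem stmt_1 {din dout dθ n : ℕ} (hn : 0 < n)
    (f0 : (Fin din → ℝ) → Fin dout → ℝ)
    (J : (Fin din → ℝ) → Matrix (Fin dout) (Fin dθ) ℝ)
    (θ' : Fin dθ → ℝ) (X : Fin n → Fin din → ℝ) (Y : Fin n → Fin dout → ℝ)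
    (ℓ : (Fin dout → ℝ) → (Fin dout → ℝ) → ℝ) (lam : ℝ)
    (hℓ0 : ∀ u ytgt, 0 ≤ ℓ u ytgt)
    (hconv : ∀ ytgt, ConvexOn ℝ Set.univ fun u => ℓ u ytgt)
    (hdiff : ∀ ytgt, Differentiable ℝ fun u => ℓ u ytgt)
    (hlam : 0 < lam)
    (θstar : Fin dθ → ℝ)
    (hmin : ∀ θ : Fin dθ → ℝ,
      empRisk f0 J θ' X Y ℓ lam Finset.univ θstar ≤ empRisk f0 J θ' X Y ℓ lam Finset.univ θ) :
    θstar = θ' + (JX J X)ᵀ *ᵥ (fun q : Fin n × Fin dout =>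
      -lam⁻¹ * ((n : ℝ)⁻¹ * gradloss ℓ (Y q.1) (flin f0 J θ' (X q.1) θstar) q.2)) :=
  stmt_1_general hn f0 J θ' X Y ℓ lam hdiff hlam θstar hmin
end
end

section
/- For every nonempty D_r ⊆ D, the unique minimizer θ̂_r* of L̂_{D_r} lies in the affine subspace C := θ̂* + col(J(X)ᵀ) of ℝ^{d_θ}, where θ̂* is the unique minimizer of L̂_D and col(J(X)ᵀ) denotes the column space of J(X)ᵀ. -/
open Finset Matrix

noncomputable section

/-!
The regularized risk sees `θ` only through the predictions `J(xᵢ)(θ - θ')` and the penalty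
`‖θ - θ'‖²`. Projecting `θ - θ'` orthogonally onto the row space of `J(X)` keeps every
prediction and strictly shrinks the penalty unless `θ - θ'` already lies there. Hence every
minimizer of every `L̂_S` lies in `θ' + col(J(X)ᵀ)`, and so the difference of two such
minimizers lies in `col(J(X)ᵀ)`.
-/

theorem LinearMap.exists_apply_eq_norm_lt_of_notMem_range_adjoint {𝕜 E F : Type*} [RCLike 𝕜]
    [NormedAddCommGroup E] [InnerProductSpace 𝕜 E] [FiniteDimensional 𝕜 E]
    [NormedAddCommGroup F] [InnerProductSpace 𝕜 F] [FiniteDimensional 𝕜 F]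
    (A : E →ₗ[𝕜] F) {w : E} (hw : w ∉ A.adjoint.range) :
    ∃ v, A v = A w ∧ ‖v‖ < ‖w‖ := by
  set V := A.adjoint.range
  refine ⟨V.starProjection w, ?_, ?_⟩
  · have hperp : w - V.starProjection w ∈ A.ker := by
      simpa [V, LinearMap.orthogonal_range] using V.sub_starProjection_mem_orthogonal w
    rw [LinearMap.mem_ker, map_sub, sub_eq_zero] at hperp
    exact hperp.symm
  · exact lt_of_le_of_ne (V.norm_starProjection_apply_le w)
      (mt (V.mem_iff_norm_starProjection w).mpr hw)

theorem Matrix.exists_mulVec_eq_sqnorm_lt {m k : Type*} [Fintype m] [Fintype k]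
    [DecidableEq m] [DecidableEq k] (A : Matrix m k ℝ) {w : k → ℝ}
    (hw : ∀ α, w ≠ Aᵀ *ᵥ α) : ∃ v, A *ᵥ v = A *ᵥ w ∧ sqnorm v < sqnorm w := by
  have hw' : WithLp.toLp 2 w ∉ A.toEuclideanLin.adjoint.range := by
    rintro ⟨α, hα⟩
    refine hw α.ofLp ?_
    simpa [← Matrix.toEuclideanLin_conjTranspose_eq_adjoint] using congrArg WithLp.ofLp hα.symm
  obtain ⟨v, hAv, hlt⟩ := A.toEuclideanLin.exists_apply_eq_norm_lt_of_notMem_range_adjoint hw'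
  refine ⟨v.ofLp, by simpa using congrArg WithLp.ofLp hAv, ?_⟩
  simpa [sqnorm, EuclideanSpace.real_norm_sq_eq] using
    pow_lt_pow_left₀ hlt (norm_nonneg _) two_ne_zero

section LinearizedRisk

variable {din dout dθ n : ℕ} (f0 : (Fin din → ℝ) → Fin dout → ℝ)
  (J : (Fin din → ℝ) → Matrix (Fin dout) (Fin dθ) ℝ) (θ' : Fin dθ → ℝ)
  (X : Fin n → Fin din → ℝ) (Y : Fin n → Fin dout → ℝ)
  (ℓ : (Fin dout → ℝ) → (Fin dout → ℝ) → ℝ) {lam : ℝ}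

theorem flin_eq_of_JX_mulVec_eq {θ₁ θ₂ : Fin dθ → ℝ}
    (h : JX J X *ᵥ (θ₁ - θ') = JX J X *ᵥ (θ₂ - θ')) (i : Fin n) :
    flin f0 J θ' (X i) θ₁ = flin f0 J θ' (X i) θ₂ := by
  funext a
  exact congrArg (f0 (X i) a + ·) (congrFun h (i, a))

theorem empRisk_lt_of_JX_mulVec_eq {S : Finset (Fin n)} (hS : S.Nonempty) (hlam : 0 < lam)
    {θ₁ θ₂ : Fin dθ → ℝ} (hJ : JX J X *ᵥ (θ₁ - θ') = JX J X *ᵥ (θ₂ - θ'))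
    (hsq : sqnorm (θ₁ - θ') < sqnorm (θ₂ - θ')) :
    empRisk f0 J θ' X Y ℓ lam S θ₁ < empRisk f0 J θ' X Y ℓ lam S θ₂ := by
  unfold empRisk
  refine mul_lt_mul_of_pos_left (Finset.sum_lt_sum_of_nonempty hS fun i _ => ?_)
    (by simpa using hS.card_pos)
  rw [flin_eq_of_JX_mulVec_eq f0 J θ' X hJ i]
  gcongr

theorem exists_sub_eq_JX_transpose_mulVec_of_forall_le {S : Finset (Fin n)} (hS : S.Nonempty)
    (hlam : 0 < lam) {θm : Fin dθ → ℝ}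
    (hmin : ∀ θ, empRisk f0 J θ' X Y ℓ lam S θm ≤ empRisk f0 J θ' X Y ℓ lam S θ) :
    ∃ α, θm - θ' = (JX J X)ᵀ *ᵥ α := by
  by_contra! h
  obtain ⟨v, hJv, hlt⟩ := (JX J X).exists_mulVec_eq_sqnorm_lt h
  refine (hmin (θ' + v)).not_gt (empRisk_lt_of_JX_mulVec_eq f0 J θ' X Y ℓ hS hlam ?_ ?_)
  · simpa using hJv
  · simpa using hlt

end LinearizedRisk

theorem stmt_3_general {din dout dθ n : ℕ}
    (f0 : (Fin din → ℝ) → Fin dout → ℝ)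
    (J : (Fin din → ℝ) → Matrix (Fin dout) (Fin dθ) ℝ)
    (θ' : Fin dθ → ℝ) (X : Fin n → Fin din → ℝ) (Y : Fin n → Fin dout → ℝ)
    (ℓ : (Fin dout → ℝ) → (Fin dout → ℝ) → ℝ) (lam : ℝ)
    (hlam : 0 < lam)
    (Dr : Finset (Fin n)) (hDr : Dr.Nonempty)
    (θstar θrstar : Fin dθ → ℝ)
    (hmin : ∀ θ : Fin dθ → ℝ,
      empRisk f0 J θ' X Y ℓ lam Finset.univ θstar ≤ empRisk f0 J θ' X Y ℓ lam Finset.univ θ)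
    (hminr : ∀ θ : Fin dθ → ℝ,
      empRisk f0 J θ' X Y ℓ lam Dr θrstar ≤ empRisk f0 J θ' X Y ℓ lam Dr θ) :
    ∃ α : Fin n × Fin dout → ℝ, θrstar = θstar + (JX J X)ᵀ *ᵥ α := by
  obtain ⟨α, hα⟩ := exists_sub_eq_JX_transpose_mulVec_of_forall_le f0 J θ' X Y ℓ
    (hDr.mono Dr.subset_univ) hlam hmin
  obtain ⟨αr, hαr⟩ := exists_sub_eq_JX_transpose_mulVec_of_forall_le f0 J θ' X Y ℓ hDr hlam hminr
  refine ⟨αr - α, ?_⟩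
  rw [Matrix.mulVec_sub, ← hα, ← hαr]
  abel

/-- for every nonempty `D_r ⊆ D`, the unique minimizer `θ̂_r*` of `L̂_{D_r}`
lies in the affine subspace `C = θ̂* + col(J(X)ᵀ)`, i.e. in the range of `φ`. -/
theorem stmt_3 {din dout dθ n : ℕ} (hn : 0 < n)
    (f0 : (Fin din → ℝ) → Fin dout → ℝ)
    (J : (Fin din → ℝ) → Matrix (Fin dout) (Fin dθ) ℝ)
    (θ' : Fin dθ → ℝ) (X : Fin n → Fin din → ℝ) (Y : Fin n → Fin dout → ℝ)
    (ℓ : (Fin dout → ℝ) → (Fin dout → ℝ) → ℝ) (lam : ℝ)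
    (hℓ0 : ∀ u ytgt, 0 ≤ ℓ u ytgt)
    (hconv : ∀ ytgt, ConvexOn ℝ Set.univ fun u => ℓ u ytgt)
    (hdiff : ∀ ytgt, Differentiable ℝ fun u => ℓ u ytgt)
    (hlam : 0 < lam)
    (Dr : Finset (Fin n)) (hDr : Dr.Nonempty)
    (θstar θrstar : Fin dθ → ℝ)
    (hmin : ∀ θ : Fin dθ → ℝ,
      empRisk f0 J θ' X Y ℓ lam Finset.univ θstar ≤ empRisk f0 J θ' X Y ℓ lam Finset.univ θ)
    (hminr : ∀ θ : Fin dθ → ℝ,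
      empRisk f0 J θ' X Y ℓ lam Dr θrstar ≤ empRisk f0 J θ' X Y ℓ lam Dr θ) :
    ∃ α : Fin n × Fin dout → ℝ, θrstar = θstar + (JX J X)ᵀ *ᵥ α :=
  stmt_3_general f0 J θ' X Y ℓ lam hlam Dr hDr θstar θrstar hmin hminr
end
end

section
/- (Proposition 3.2) Assume ℓ is convex in its first argument. Then for any nonempty D_r ⊆ D, the constrained problem min_{θ ∈ C} L̂_{D_r}(θ) over the affine subspace C := θ̂* + col(J(X)ᵀ) and the unconstrained problem min_{θ ∈ ℝ^{d_θ}} L̂_{D_r}(θ) each have a unique minimizer, and these minimizers coincide. -/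
open Finset Matrix

noncomputable section

/-! The regularized linearized risk `L̂_S` is strictly convex (its data term is `ℓ` composed with
affine maps, and `λ/2 ‖θ - θ'‖²` is strictly convex) and coercive, so it has a unique global
minimizer. The predictions `f^lin(x_i, θ)` on the dataset only see the component of `θ - θ'` in
`col(J(X)ᵀ)`: projecting `θ - θ'` orthogonally onto that space keeps the data term and does not
increase the regularizer, so the minimizer of every `L̂_S` lies in `θ' + col(J(X)ᵀ)`. For `S = D`
and `S = D_r` this puts the minimizer of `L̂_{D_r}` in `θ̂* + col(J(X)ᵀ)`, where it is then also
the unique constrained minimizer. -/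

section SqNorm

variable {ι : Type*} [Fintype ι]

lemma sqnorm_eq_dotProduct (v : ι → ℝ) : sqnorm v = v ⬝ᵥ v := by
  simp only [sqnorm, dotProduct, sq]

lemma sqnorm_nonneg (v : ι → ℝ) : 0 ≤ sqnorm v :=
  sum_nonneg fun i _ => sq_nonneg (v i)

lemma sqnorm_pos {v : ι → ℝ} (hv : v ≠ 0) : 0 < sqnorm v := by
  obtain ⟨i, hi⟩ := Function.ne_iff.mp hv
  exact sum_pos' (fun j _ => sq_nonneg (v j)) ⟨i, mem_univ i, sq_pos_of_ne_zero hi⟩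

lemma sqnorm_smul_add_smul {a b : ℝ} (hab : a + b = 1) (x y : ι → ℝ) :
    sqnorm (a • x + b • y) = a * sqnorm x + b * sqnorm y - a * b * sqnorm (x - y) := by
  obtain rfl : b = 1 - a := by linarith
  simp only [sqnorm, mul_sum, ← sum_add_distrib, ← sum_sub_distrib]
  refine sum_congr rfl fun i _ => ?_
  simp only [Pi.add_apply, Pi.sub_apply, Pi.smul_apply, smul_eq_mul]
  ring

lemma strictConvexOn_mul_sqnorm_sub {c : ℝ} (hc : 0 < c) (x₀ : ι → ℝ) :
    StrictConvexOn ℝ Set.univ fun x => c * sqnorm (x - x₀) := by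
  refine ⟨convex_univ, fun x _ y _ hxy a b ha hb hab => ?_⟩
  have hshift : a • x + b • y - x₀ = a • (x - x₀) + b • (y - x₀) := by
    rw [smul_sub, smul_sub, sub_add_sub_comm, ← add_smul, hab, one_smul]
  dsimp only
  rw [hshift, sqnorm_smul_add_smul hab, sub_sub_sub_cancel_right, smul_eq_mul, smul_eq_mul]
  have := mul_pos (mul_pos ha hb) (mul_pos hc (sqnorm_pos (sub_ne_zero.mpr hxy)))
  linarith

lemma norm_sq_le_sqnorm (v : ι → ℝ) : ‖v‖ ^ 2 ≤ sqnorm v := by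
  have hle : ‖v‖ ≤ √(sqnorm v) := (pi_norm_le_iff_of_nonneg (Real.sqrt_nonneg _)).mpr
    fun i => Real.abs_le_sqrt (single_le_sum (fun j _ => sq_nonneg (v j)) (mem_univ i))
  calc ‖v‖ ^ 2 ≤ √(sqnorm v) ^ 2 := by gcongr
    _ = sqnorm v := Real.sq_sqrt (sqnorm_nonneg v)

end SqNorm

lemma ConvexOn.sum {𝕜 E β ι : Type*} [Semiring 𝕜] [PartialOrder 𝕜] [AddCommMonoid E]
    [AddCommMonoid β] [PartialOrder β] [IsOrderedAddMonoid β] [SMul 𝕜 E] [Module 𝕜 β]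
    {s : Set E} (hs : Convex 𝕜 s) {t : Finset ι} {f : ι → E → β}
    (hf : ∀ i ∈ t, ConvexOn 𝕜 s (f i)) : ConvexOn 𝕜 s fun x => ∑ i ∈ t, f i x := by
  classical
  induction t using Finset.induction_on with
  | empty => simpa only [sum_empty] using convexOn_const 0 hs
  | insert i t hi ih =>
    simp_rw [sum_insert hi]
    exact (hf i (mem_insert_self i t)).add (ih fun j hj => hf j (mem_insert_of_mem hj))

namespace Matrix

variable {m k : Type*} [Fintype m] [Fintype k]

-- `Aᵀ *ᵥ c` is the orthogonal projection of `v` onto `col(Aᵀ)`.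
lemma exists_mulVec_transpose_mulVec_eq (A : Matrix m k ℝ) (v : k → ℝ) :
    ∃ c : m → ℝ, A *ᵥ (Aᵀ *ᵥ c) = A *ᵥ v := by
  have hrange : LinearMap.range (A * Aᵀ).mulVecLin = LinearMap.range A.mulVecLin := by
    refine Submodule.eq_of_le_of_finrank_eq ?_ (rank_self_mul_transpose A)
    rw [mulVecLin_mul]
    exact LinearMap.range_comp_le_range _ _
  obtain ⟨c, hc⟩ : A *ᵥ v ∈ LinearMap.range (A * Aᵀ).mulVecLin := hrange ▸ ⟨v, rfl⟩
  exact ⟨c, by rwa [mulVec_mulVec]⟩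

lemma sqnorm_transpose_mulVec_add {A : Matrix m k ℝ} (c : m → ℝ) {z : k → ℝ} (hz : A *ᵥ z = 0) :
    sqnorm (Aᵀ *ᵥ c + z) = sqnorm (Aᵀ *ᵥ c) + sqnorm z := by
  have horth : (Aᵀ *ᵥ c) ⬝ᵥ z = 0 := by
    rw [mulVec_transpose, ← dotProduct_mulVec, hz, dotProduct_zero]
  simp only [sqnorm_eq_dotProduct, add_dotProduct, dotProduct_add, horth, dotProduct_comm z]
  ring

end Matrix

section LinearizedRisk

open Filter

variable {din dout dθ n : ℕ} (f0 : (Fin din → ℝ) → Fin dout → ℝ)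
  (J : (Fin din → ℝ) → Matrix (Fin dout) (Fin dθ) ℝ) (θ' : Fin dθ → ℝ)

def flinAffine (x : Fin din → ℝ) : (Fin dθ → ℝ) →ᵃ[ℝ] (Fin dout → ℝ) where
  toFun := flin f0 J θ' x
  linear := (J x).mulVecLin
  map_vadd' θ v := by
    simp only [flin, vadd_eq_add, mulVecLin_apply, add_sub_assoc, mulVec_add]
    abel

lemma convexOn_comp_flin {g : (Fin dout → ℝ) → ℝ} (hg : ConvexOn ℝ Set.univ g)
    (x : Fin din → ℝ) : ConvexOn ℝ Set.univ fun θ => g (flin f0 J θ' x θ) :=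
  hg.comp_affineMap (flinAffine f0 J θ' x)

lemma flin_eq_of_mulVec_sub_eq_zero {x : Fin din → ℝ} {θ₁ θ₂ : Fin dθ → ℝ}
    (h : J x *ᵥ (θ₁ - θ₂) = 0) : flin f0 J θ' x θ₁ = flin f0 J θ' x θ₂ := by
  rw [mulVec_sub, sub_eq_zero] at h
  simp only [flin, mulVec_sub, h]

variable (X : Fin n → Fin din → ℝ) (Y : Fin n → Fin dout → ℝ)
  (ℓ : (Fin dout → ℝ) → (Fin dout → ℝ) → ℝ) (lam : ℝ) {S : Finset (Fin n)}

lemma empRisk_eq (hS : S.Nonempty) (θ : Fin dθ → ℝ) :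
    empRisk f0 J θ' X Y ℓ lam S θ =
      (#S : ℝ)⁻¹ * ∑ i ∈ S, ℓ (flin f0 J θ' (X i) θ) (Y i) + lam / 2 * sqnorm (θ - θ') := by
  have hcard : (#S : ℝ) ≠ 0 := by exact_mod_cast hS.card_ne_zero
  rw [empRisk, sum_add_distrib, sum_const, nsmul_eq_mul, mul_add, inv_mul_cancel_left₀ hcard]

lemma strictConvexOn_empRisk (hconv : ∀ ytgt, ConvexOn ℝ Set.univ fun u => ℓ u ytgt)
    (hlam : 0 < lam) (hS : S.Nonempty) :
    StrictConvexOn ℝ Set.univ (empRisk f0 J θ' X Y ℓ lam S) := by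
  have hdata :
      ConvexOn ℝ Set.univ fun θ => (#S : ℝ)⁻¹ * ∑ i ∈ S, ℓ (flin f0 J θ' (X i) θ) (Y i) :=
    (ConvexOn.sum convex_univ fun i _ => convexOn_comp_flin f0 J θ' (hconv (Y i)) (X i)).smul
      (by positivity)
  have hreg := strictConvexOn_mul_sqnorm_sub (half_pos hlam) θ'
  rw [funext (empRisk_eq f0 J θ' X Y ℓ lam hS)]
  exact hdata.add_strictConvexOn hreg

lemma le_empRisk (hℓ0 : ∀ u ytgt, 0 ≤ ℓ u ytgt) (hS : S.Nonempty) (θ : Fin dθ → ℝ) :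
    lam / 2 * sqnorm (θ - θ') ≤ empRisk f0 J θ' X Y ℓ lam S θ := by
  rw [empRisk_eq f0 J θ' X Y ℓ lam hS, le_add_iff_nonneg_left]
  exact mul_nonneg (by positivity) (sum_nonneg fun i _ => hℓ0 _ _)

lemma tendsto_empRisk_cocompact (hℓ0 : ∀ u ytgt, 0 ≤ ℓ u ytgt) (hlam : 0 < lam)
    (hS : S.Nonempty) : Tendsto (empRisk f0 J θ' X Y ℓ lam S) (cocompact _) atTop := by
  have hnorm : Tendsto (fun θ => ‖θ - θ'‖) (cocompact (Fin dθ → ℝ)) atTop :=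
    tendsto_norm_cocompact_atTop.comp (Homeomorph.subRight θ').isClosedEmbedding.tendsto_cocompact
  refine tendsto_atTop_mono (fun θ => ?_)
    (((tendsto_pow_atTop two_ne_zero).comp hnorm).const_mul_atTop (half_pos hlam))
  calc lam / 2 * ‖θ - θ'‖ ^ 2 ≤ lam / 2 * sqnorm (θ - θ') := by gcongr; exact norm_sq_le_sqnorm _
    _ ≤ empRisk f0 J θ' X Y ℓ lam S θ := le_empRisk f0 J θ' X Y ℓ lam hℓ0 hS θ

lemma exists_forall_empRisk_le (hℓ0 : ∀ u ytgt, 0 ≤ ℓ u ytgt)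
    (hconv : ∀ ytgt, ConvexOn ℝ Set.univ fun u => ℓ u ytgt) (hlam : 0 < lam) (hS : S.Nonempty) :
    ∃ θm, ∀ θ, empRisk f0 J θ' X Y ℓ lam S θm ≤ empRisk f0 J θ' X Y ℓ lam S θ := by
  have hcont := (strictConvexOn_empRisk f0 J θ' X Y ℓ lam hconv hlam hS).convexOn.continuousOn
    isOpen_univ
  exact (continuousOn_univ.mp hcont).exists_forall_le
    (tendsto_empRisk_cocompact f0 J θ' X Y ℓ lam hℓ0 hlam hS)

lemma exists_empRisk_add_transpose_mulVec_le (hlam : 0 ≤ lam) (θ : Fin dθ → ℝ) :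
    ∃ c, empRisk f0 J θ' X Y ℓ lam S (θ' + (JX J X)ᵀ *ᵥ c) ≤ empRisk f0 J θ' X Y ℓ lam S θ := by
  obtain ⟨c, hc⟩ := (JX J X).exists_mulVec_transpose_mulVec_eq (θ - θ')
  have hker : JX J X *ᵥ (θ - θ' - (JX J X)ᵀ *ᵥ c) = 0 := by rw [mulVec_sub, hc, sub_self]
  have hflin (i : Fin n) : flin f0 J θ' (X i) (θ' + (JX J X)ᵀ *ᵥ c) = flin f0 J θ' (X i) θ := by
    refine flin_eq_of_mulVec_sub_eq_zero f0 J θ' ?_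
    rw [show θ' + (JX J X)ᵀ *ᵥ c - θ = -(θ - θ' - (JX J X)ᵀ *ᵥ c) by abel, mulVec_neg,
      neg_eq_zero]
    exact funext fun a => congrFun hker (i, a)
  have hsq : sqnorm (θ' + (JX J X)ᵀ *ᵥ c - θ') ≤ sqnorm (θ - θ') := by
    rw [add_sub_cancel_left, ← add_sub_cancel ((JX J X)ᵀ *ᵥ c) (θ - θ'),
      Matrix.sqnorm_transpose_mulVec_add c hker]
    exact le_add_of_nonneg_right (sqnorm_nonneg _)
  refine ⟨c, ?_⟩
  unfold empRisk
  gcongr with i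
  rw [hflin i]

lemma exists_eq_add_transpose_mulVec_of_forall_empRisk_le
    (hconv : ∀ ytgt, ConvexOn ℝ Set.univ fun u => ℓ u ytgt) (hlam : 0 < lam) (hS : S.Nonempty)
    {θ : Fin dθ → ℝ} (hθ : ∀ t, empRisk f0 J θ' X Y ℓ lam S θ ≤ empRisk f0 J θ' X Y ℓ lam S t) :
    ∃ c, θ = θ' + (JX J X)ᵀ *ᵥ c := by
  obtain ⟨c, hc⟩ := exists_empRisk_add_transpose_mulVec_le f0 J θ' X Y ℓ lam hlam.le θ
  exact ⟨c, (strictConvexOn_empRisk f0 J θ' X Y ℓ lam hconv hlam hS).eq_of_isMinOn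
    (isMinOn_univ_iff.mpr hθ) (isMinOn_univ_iff.mpr fun t => hc.trans (hθ t)) trivial trivial⟩

end LinearizedRisk

theorem stmt_4_general {din dout dθ n : ℕ}
    (f0 : (Fin din → ℝ) → Fin dout → ℝ)
    (J : (Fin din → ℝ) → Matrix (Fin dout) (Fin dθ) ℝ)
    (θ' : Fin dθ → ℝ) (X : Fin n → Fin din → ℝ) (Y : Fin n → Fin dout → ℝ)
    (ℓ : (Fin dout → ℝ) → (Fin dout → ℝ) → ℝ) (lam : ℝ)
    (hℓ0 : ∀ u ytgt, 0 ≤ ℓ u ytgt)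
    (hconv : ∀ ytgt, ConvexOn ℝ Set.univ fun u => ℓ u ytgt)
    (hlam : 0 < lam)
    (θstar : Fin dθ → ℝ)
    (hmin : ∀ θ : Fin dθ → ℝ,
      empRisk f0 J θ' X Y ℓ lam Finset.univ θstar ≤ empRisk f0 J θ' X Y ℓ lam Finset.univ θ)
    (Dr : Finset (Fin n)) (hDr : Dr.Nonempty) :
    ∃ θm : Fin dθ → ℝ,
      θm ∈ Set.range (phi J X θstar) ∧
      (∀ θ ∈ Set.range (phi J X θstar),
        empRisk f0 J θ' X Y ℓ lam Dr θm ≤ empRisk f0 J θ' X Y ℓ lam Dr θ) ∧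
      (∀ θ : Fin dθ → ℝ, empRisk f0 J θ' X Y ℓ lam Dr θm ≤ empRisk f0 J θ' X Y ℓ lam Dr θ) ∧
      (∀ θc ∈ Set.range (phi J X θstar),
        (∀ θ ∈ Set.range (phi J X θstar),
          empRisk f0 J θ' X Y ℓ lam Dr θc ≤ empRisk f0 J θ' X Y ℓ lam Dr θ) → θc = θm) ∧
      (∀ θu : Fin dθ → ℝ,
        (∀ θ : Fin dθ → ℝ, empRisk f0 J θ' X Y ℓ lam Dr θu ≤ empRisk f0 J θ' X Y ℓ lam Dr θ) →
          θu = θm) := by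
  obtain ⟨θm, hθm⟩ := exists_forall_empRisk_le f0 J θ' X Y ℓ lam hℓ0 hconv hlam hDr
  have hunique (θ : Fin dθ → ℝ)
      (hθ : ∀ t, empRisk f0 J θ' X Y ℓ lam Dr θ ≤ empRisk f0 J θ' X Y ℓ lam Dr t) : θ = θm :=
    (strictConvexOn_empRisk f0 J θ' X Y ℓ lam hconv hlam hDr).eq_of_isMinOn
      (isMinOn_univ_iff.mpr hθ) (isMinOn_univ_iff.mpr hθm) trivial trivial
  obtain ⟨cm, hcm⟩ :=
    exists_eq_add_transpose_mulVec_of_forall_empRisk_le f0 J θ' X Y ℓ lam hconv hlam hDr hθm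
  obtain ⟨cs, hcs⟩ := exists_eq_add_transpose_mulVec_of_forall_empRisk_le f0 J θ' X Y ℓ lam
    hconv hlam (hDr.mono (subset_univ Dr)) hmin
  have hmem : θm ∈ Set.range (phi J X θstar) :=
    ⟨cm - cs, by rw [phi, hcm, hcs, mulVec_sub]; abel⟩
  exact ⟨θm, hmem, fun θ _ => hθm θ, hθm,
    fun θc _ hθc => hunique θc fun t => (hθc θm hmem).trans (hθm t), hunique⟩

/-- Proposition 3.2: if `ℓ` is convex in its first argument, then for any
nonempty `D_r ⊆ D` the constrained problem `min_{θ ∈ C} L̂_{D_r}(θ)` over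
`C = θ̂* + col(J(X)ᵀ) = range φ` and the unconstrained problem `min_θ L̂_{D_r}(θ)` each
have a unique minimizer, and these minimizers coincide. -/
theorem stmt_4 {din dout dθ n : ℕ} (hn : 0 < n)
    (f0 : (Fin din → ℝ) → Fin dout → ℝ)
    (J : (Fin din → ℝ) → Matrix (Fin dout) (Fin dθ) ℝ)
    (θ' : Fin dθ → ℝ) (X : Fin n → Fin din → ℝ) (Y : Fin n → Fin dout → ℝ)
    (ℓ : (Fin dout → ℝ) → (Fin dout → ℝ) → ℝ) (lam : ℝ)
    (hℓ0 : ∀ u ytgt, 0 ≤ ℓ u ytgt)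
    (hconv : ∀ ytgt, ConvexOn ℝ Set.univ fun u => ℓ u ytgt)
    (hdiff : ∀ ytgt, Differentiable ℝ fun u => ℓ u ytgt)
    (hlam : 0 < lam)
    (θstar : Fin dθ → ℝ)
    (hmin : ∀ θ : Fin dθ → ℝ,
      empRisk f0 J θ' X Y ℓ lam Finset.univ θstar ≤ empRisk f0 J θ' X Y ℓ lam Finset.univ θ)
    (Dr : Finset (Fin n)) (hDr : Dr.Nonempty) :
    ∃ θm : Fin dθ → ℝ,
      θm ∈ Set.range (phi J X θstar) ∧
      (∀ θ ∈ Set.range (phi J X θstar),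
        empRisk f0 J θ' X Y ℓ lam Dr θm ≤ empRisk f0 J θ' X Y ℓ lam Dr θ) ∧
      (∀ θ : Fin dθ → ℝ, empRisk f0 J θ' X Y ℓ lam Dr θm ≤ empRisk f0 J θ' X Y ℓ lam Dr θ) ∧
      (∀ θc ∈ Set.range (phi J X θstar),
        (∀ θ ∈ Set.range (phi J X θstar),
          empRisk f0 J θ' X Y ℓ lam Dr θc ≤ empRisk f0 J θ' X Y ℓ lam Dr θ) → θc = θm) ∧
      (∀ θu : Fin dθ → ℝ,
        (∀ θ : Fin dθ → ℝ, empRisk f0 J θ' X Y ℓ lam Dr θu ≤ empRisk f0 J θ' X Y ℓ lam Dr θ) →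
          θu = θm) :=
  stmt_4_general f0 J θ' X Y ℓ lam hℓ0 hconv hlam θstar hmin Dr hDr
end
end

section
/- Assume ℓ is convex in its first argument, λ > 0, and J(X) has full row rank. Then Δα* := argmin_{Δα ∈ ℝ^{d_out·n}} L̃_D(Δα) exists, is unique, and equals the zero vector 0 ∈ ℝ^{d_out·n}. -/
open Finset Matrix

noncomputable section

lemma glin_eq_flin_phi {din dout dθ n : ℕ}
    (f0 : (Fin din → ℝ) → Fin dout → ℝ)
    (J : (Fin din → ℝ) → Matrix (Fin dout) (Fin dθ) ℝ)
    (θ' : Fin dθ → ℝ) (X : Fin n → Fin din → ℝ) (θstar : Fin dθ → ℝ)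
    (xt : Fin din → ℝ) (β : Fin n × Fin dout → ℝ) :
    glin f0 J θ' X θstar xt β = flin f0 J θ' xt (phi J X θstar β) := by
  have h1 : (θstar + (JX J X)ᵀ *ᵥ β) - θ' = (θstar - θ') + (JX J X)ᵀ *ᵥ β := by
    funext p; simp [Pi.add_apply, Pi.sub_apply]; ring
  rw [glin, flin, flin, phi, h1, Matrix.mulVec_add, KxX, ← Matrix.mulVec_mulVec]
  abel

lemma dualRisk_eq_empRisk {din dout dθ n : ℕ}
    (f0 : (Fin din → ℝ) → Fin dout → ℝ)
    (J : (Fin din → ℝ) → Matrix (Fin dout) (Fin dθ) ℝ)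
    (θ' : Fin dθ → ℝ) (X : Fin n → Fin din → ℝ) (Y : Fin n → Fin dout → ℝ)
    (ℓ : (Fin dout → ℝ) → (Fin dout → ℝ) → ℝ) (lam : ℝ) (θstar : Fin dθ → ℝ)
    (S : Finset (Fin n)) (β : Fin n × Fin dout → ℝ) :
    dualRisk f0 J θ' X Y ℓ lam θstar S β = empRisk f0 J θ' X Y ℓ lam S (phi J X θstar β) := by
  unfold dualRisk empRisk
  congr 1
  refine Finset.sum_congr rfl fun i _ => ?_
  rw [glin_eq_flin_phi]

lemma sqnorm_mid_lt {ι : Type*} [Fintype ι] {u v : ι → ℝ} (h : u ≠ v) :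
    sqnorm (fun i => (u i + v i) / 2) < sqnorm u / 2 + sqnorm v / 2 := by
  obtain ⟨i0, hi0⟩ := Function.ne_iff.mp h
  have hrhs : sqnorm u / 2 + sqnorm v / 2 = ∑ i, (u i ^ 2 / 2 + v i ^ 2 / 2) := by
    simp [sqnorm, Finset.sum_add_distrib, Finset.sum_div]
  rw [hrhs, sqnorm]
  refine Finset.sum_lt_sum (fun i _ => by nlinarith [sq_nonneg (u i - v i)]) ?_
  refine ⟨i0, Finset.mem_univ _, ?_⟩
  have : u i0 - v i0 ≠ 0 := sub_ne_zero.mpr hi0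
  have h2 : 0 < (u i0 - v i0) ^ 2 := by positivity
  nlinarith [h2]

/-- Uniqueness of the minimizer of the (strictly convex) regularized empirical risk. -/
lemma empRisk_min_unique {din dout dθ n : ℕ} (hn : 0 < n)
    (f0 : (Fin din → ℝ) → Fin dout → ℝ)
    (J : (Fin din → ℝ) → Matrix (Fin dout) (Fin dθ) ℝ)
    (θ' : Fin dθ → ℝ) (X : Fin n → Fin din → ℝ) (Y : Fin n → Fin dout → ℝ)
    (ℓ : (Fin dout → ℝ) → (Fin dout → ℝ) → ℝ) (lam : ℝ)
    (hconv : ∀ ytgt, ConvexOn ℝ Set.univ fun u => ℓ u ytgt)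
    (hlam : 0 < lam)
    (θstar : Fin dθ → ℝ)
    (hmin : ∀ θ : Fin dθ → ℝ,
      empRisk f0 J θ' X Y ℓ lam Finset.univ θstar ≤ empRisk f0 J θ' X Y ℓ lam Finset.univ θ)
    (θ1 : Fin dθ → ℝ)
    (heq : empRisk f0 J θ' X Y ℓ lam Finset.univ θ1 = empRisk f0 J θ' X Y ℓ lam Finset.univ θstar) :
    θ1 = θstar := by
  by_contra hne
  set θm : Fin dθ → ℝ := fun p => (θ1 p + θstar p) / 2 with hθm
  have hvm : θm - θ' = (1/2 : ℝ) • (θ1 - θ') + (1/2 : ℝ) • (θstar - θ') := by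
    funext p
    simp [hθm, Pi.sub_apply, Pi.add_apply, Pi.smul_apply, smul_eq_mul]
    ring
  have hflin : ∀ x : Fin din → ℝ,
      flin f0 J θ' x θm = (1/2 : ℝ) • flin f0 J θ' x θ1 + (1/2 : ℝ) • flin f0 J θ' x θstar := by
    intro x
    funext a
    simp only [flin, hvm, Matrix.mulVec_add, Matrix.mulVec_smul, Pi.add_apply, Pi.smul_apply,
      smul_eq_mul]
    ring
  have hℓmid : ∀ i : Fin n,
      ℓ (flin f0 J θ' (X i) θm) (Y i) ≤
        1/2 * ℓ (flin f0 J θ' (X i) θ1) (Y i) + 1/2 * ℓ (flin f0 J θ' (X i) θstar) (Y i) := by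
    intro i
    have h := (hconv (Y i)).2 (Set.mem_univ (flin f0 J θ' (X i) θ1))
      (Set.mem_univ (flin f0 J θ' (X i) θstar))
      (by norm_num : (0:ℝ) ≤ 1/2) (by norm_num : (0:ℝ) ≤ 1/2) (by norm_num : (1:ℝ)/2 + 1/2 = 1)
    rw [hflin (X i)]
    simpa using h
  have hsqm : sqnorm (θm - θ') < sqnorm (θ1 - θ') / 2 + sqnorm (θstar - θ') / 2 := by
    have hne' : θ1 - θ' ≠ θstar - θ' := fun hc => hne (by
      funext p
      have := congrFun hc p
      simp [Pi.sub_apply] at this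
      linarith)
    have := sqnorm_mid_lt hne'
    have he : (fun i => ((θ1 - θ') i + (θstar - θ') i) / 2) = θm - θ' := by
      funext p; simp [hθm, Pi.sub_apply]; ring
    rwa [he] at this
  -- midpoint has strictly smaller empirical risk
  have hstrict : empRisk f0 J θ' X Y ℓ lam Finset.univ θm <
      empRisk f0 J θ' X Y ℓ lam Finset.univ θstar := by
    unfold empRisk
    have hcard : ((Finset.univ : Finset (Fin n)).card : ℝ) = (n : ℝ) := by simp
    have hnpos : (0:ℝ) < (n : ℝ) := by exact_mod_cast hn
    have hsum : ∑ i : Fin n, (ℓ (flin f0 J θ' (X i) θm) (Y i) + lam / 2 * sqnorm (θm - θ')) <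
        1/2 * ∑ i : Fin n, (ℓ (flin f0 J θ' (X i) θ1) (Y i) + lam / 2 * sqnorm (θ1 - θ'))
        + 1/2 * ∑ i : Fin n, (ℓ (flin f0 J θ' (X i) θstar) (Y i)
            + lam / 2 * sqnorm (θstar - θ')) := by
      rw [Finset.mul_sum, Finset.mul_sum, ← Finset.sum_add_distrib]
      refine Finset.sum_lt_sum_of_nonempty ⟨⟨0, hn⟩, Finset.mem_univ _⟩ fun i _ => ?_
      have h1 := hℓmid i
      nlinarith [hsqm]
    have hle : ∀ θ, (↑(Finset.univ : Finset (Fin n)).card : ℝ)⁻¹ *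
        ∑ i : Fin n, (ℓ (flin f0 J θ' (X i) θ) (Y i) + lam / 2 * sqnorm (θ - θ'))
        = empRisk f0 J θ' X Y ℓ lam Finset.univ θ := fun θ => rfl
    have hE := heq
    unfold empRisk at hE
    have hinv : (0:ℝ) < ((Finset.univ : Finset (Fin n)).card : ℝ)⁻¹ := by
      rw [hcard]; positivity
    calc (↑(Finset.univ : Finset (Fin n)).card : ℝ)⁻¹ *
        ∑ i : Fin n, (ℓ (flin f0 J θ' (X i) θm) (Y i) + lam / 2 * sqnorm (θm - θ'))
        < (↑(Finset.univ : Finset (Fin n)).card : ℝ)⁻¹ *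
          (1/2 * ∑ i : Fin n, (ℓ (flin f0 J θ' (X i) θ1) (Y i) + lam / 2 * sqnorm (θ1 - θ'))
          + 1/2 * ∑ i : Fin n, (ℓ (flin f0 J θ' (X i) θstar) (Y i)
              + lam / 2 * sqnorm (θstar - θ'))) := by
          exact (mul_lt_mul_iff_right₀ hinv).mpr hsum
      _ = 1/2 * ((↑(Finset.univ : Finset (Fin n)).card : ℝ)⁻¹ *
            ∑ i : Fin n, (ℓ (flin f0 J θ' (X i) θ1) (Y i) + lam / 2 * sqnorm (θ1 - θ')))
          + 1/2 * ((↑(Finset.univ : Finset (Fin n)).card : ℝ)⁻¹ *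
            ∑ i : Fin n, (ℓ (flin f0 J θ' (X i) θstar) (Y i)
              + lam / 2 * sqnorm (θstar - θ'))) := by ring
      _ = (↑(Finset.univ : Finset (Fin n)).card : ℝ)⁻¹ *
            ∑ i : Fin n, (ℓ (flin f0 J θ' (X i) θstar) (Y i)
              + lam / 2 * sqnorm (θstar - θ')) := by rw [hE]; ring
  exact absurd (hmin θm) (not_le.mpr hstrict)

/-- if `ℓ` is convex in its first argument, `λ > 0`, and `J(X)` has full row
rank, then `Δα* = argmin_{Δα} L̃_D(Δα)` exists, is unique, and equals the zero vector. -/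
theorem stmt_7 {din dout dθ n : ℕ} (hn : 0 < n)
    (f0 : (Fin din → ℝ) → Fin dout → ℝ)
    (J : (Fin din → ℝ) → Matrix (Fin dout) (Fin dθ) ℝ)
    (θ' : Fin dθ → ℝ) (X : Fin n → Fin din → ℝ) (Y : Fin n → Fin dout → ℝ)
    (ℓ : (Fin dout → ℝ) → (Fin dout → ℝ) → ℝ) (lam : ℝ)
    (hℓ0 : ∀ u ytgt, 0 ≤ ℓ u ytgt)
    (hconv : ∀ ytgt, ConvexOn ℝ Set.univ fun u => ℓ u ytgt)
    (hdiff : ∀ ytgt, Differentiable ℝ fun u => ℓ u ytgt)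
    (hlam : 0 < lam)
    (hrank : LinearIndependent ℝ fun q : Fin n × Fin dout => (JX J X q : Fin dθ → ℝ))
    (θstar : Fin dθ → ℝ)
    (hmin : ∀ θ : Fin dθ → ℝ,
      empRisk f0 J θ' X Y ℓ lam Finset.univ θstar ≤ empRisk f0 J θ' X Y ℓ lam Finset.univ θ) :
    (∀ β : Fin n × Fin dout → ℝ,
      dualRisk f0 J θ' X Y ℓ lam θstar Finset.univ (0 : Fin n × Fin dout → ℝ) ≤
        dualRisk f0 J θ' X Y ℓ lam θstar Finset.univ β) ∧
    (∀ β : Fin n × Fin dout → ℝ,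
      (∀ γ : Fin n × Fin dout → ℝ,
        dualRisk f0 J θ' X Y ℓ lam θstar Finset.univ β ≤
          dualRisk f0 J θ' X Y ℓ lam θstar Finset.univ γ) →
      β = 0) := by
  have hphi0 : phi J X θstar (0 : Fin n × Fin dout → ℝ) = θstar := by
    simp [phi, Matrix.mulVec_zero]
  have hd0 : dualRisk f0 J θ' X Y ℓ lam θstar Finset.univ (0 : Fin n × Fin dout → ℝ)
      = empRisk f0 J θ' X Y ℓ lam Finset.univ θstar := by
    rw [dualRisk_eq_empRisk, hphi0]
  constructor
  · intro β
    rw [hd0, dualRisk_eq_empRisk]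
    exact hmin _
  · intro β hβ
    -- β is a minimizer, so empRisk (phi β) = empRisk θstar
    have h1 : empRisk f0 J θ' X Y ℓ lam Finset.univ (phi J X θstar β)
        = empRisk f0 J θ' X Y ℓ lam Finset.univ θstar := by
      have hle : dualRisk f0 J θ' X Y ℓ lam θstar Finset.univ β ≤
          dualRisk f0 J θ' X Y ℓ lam θstar Finset.univ 0 := hβ 0
      rw [hd0, dualRisk_eq_empRisk] at hle
      exact le_antisymm hle (hmin _)
    have h2 : phi J X θstar β = θstar :=
      empRisk_min_unique hn f0 J θ' X Y ℓ lam hconv hlam θstar hmin _ h1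
    have h3 : (JX J X)ᵀ *ᵥ β = 0 := by
      have := h2
      unfold phi at this
      funext p
      have := congrFun this p
      simp [Pi.add_apply] at this
      simpa using this
    have h4 : ∑ q : Fin n × Fin dout, β q • (JX J X q : Fin dθ → ℝ) = 0 := by
      funext p
      have := congrFun h3 p
      simp only [Matrix.mulVec, dotProduct, Matrix.transpose_apply] at this
      simpa [Finset.sum_apply, Pi.smul_apply, smul_eq_mul, mul_comm] using this
    have h5 := Fintype.linearIndependent_iff.mp hrank β h4
    funext q
    exact h5 q
end
end

section
/- Assume ℓ is convex and twice differentiable in its first argument, and let D be partitioned into a nonempty forget set D_f and a nonempty retain set D_r. Then the upweighted dual Hessian at Δα = 0 satisfies H_{Δα*} := ∇²_{Δα} L̃_D(0) − (|D_f|/|D|) ∇²_{Δα} L̃_{D_f}(0) = (|D_r|/|D|) ( K_rᵀ · ∇²_{f^lin(X_r, θ̂*)} L̂_{D_r} · K_r + λ K ), where K_r := K(X_r, X), K := K(X, X), and ∇²_{f^lin(X_r, θ̂*)} L̂_{D_r} is the block-diagonal matrix with blocks (1/|D_r|)·∇²_u ℓ(u, y) at u = f^lin(x, θ̂*) for (x,y)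 ∈ D_r. -/
/-!
Each summand of the dual risk is a C² function composed with an affine map of `Δα`: the loss
`ℓ(·, y_i)` after `Δα ↦ f^lin(x_i, θ̂*) + K(x_i, X) Δα`, and the squared norm after
`Δα ↦ (θ̂* - θ') + J(X)ᵀ Δα`. Hessians transform under affine maps by congruence, so
`∇²L̃_S(0)` is the average over `S` of `K(x_i, X)ᵀ ∇²ℓ(f^lin(x_i, θ̂*), y_i) K(x_i, X) + λ K`.
Weighting the `D_f`-average by `|D_f|/|D|` turns both averages into sums divided by `|D|`,
so the forget-set terms cancel and the retain-set sum is what remains.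
-/

open Finset Matrix

noncomputable section

section Calculus

variable {𝕜 E F G : Type*} [NontriviallyNormedField 𝕜] [NormedAddCommGroup E] [NormedSpace 𝕜 E]
  [NormedAddCommGroup F] [NormedSpace 𝕜 F] [NormedAddCommGroup G] [NormedSpace 𝕜 G]

theorem fderiv_fderiv_apply_eq_iteratedFDeriv_two {f : E → F} {x : E}
    (hf : DifferentiableAt 𝕜 (fderiv 𝕜 f) x) (v w : E) :
    fderiv 𝕜 (fun y => fderiv 𝕜 f y w) x v = iteratedFDeriv 𝕜 2 f x ![v, w] := by
  rw [iteratedFDeriv_two_apply, fderiv_clm_apply hf (differentiableAt_const w)]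
  simp

theorem iteratedFDeriv_comp_affine_apply {k : ℕ} {f : E → F} (hf : ContDiff 𝕜 k f)
    (c : E) (A : G →L[𝕜] E) (x : G) (m : Fin k → G) :
    iteratedFDeriv 𝕜 k (fun y => f (c + A y)) x m
      = iteratedFDeriv 𝕜 k f (c + A x) (fun i => A (m i)) := by
  have hc : ContDiff 𝕜 k fun z => f (c + z) := hf.comp (contDiff_const.add contDiff_id)
  have hcomp := A.iteratedFDeriv_comp_right hc x le_rfl
  simp only [Function.comp_def] at hcomp
  rw [hcomp, ContinuousMultilinearMap.compContinuousLinearMap_apply, iteratedFDeriv_comp_add_left]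

end Calculus

section Coordinates

variable {ι : Type*} [Fintype ι]

theorem iteratedFDeriv_two_apply_eq_sum_single [DecidableEq ι] (f : (ι → ℝ) → ℝ) (u v w : ι → ℝ) :
    iteratedFDeriv ℝ 2 f u ![v, w]
      = ∑ a, ∑ b, v a * iteratedFDeriv ℝ 2 f u ![Pi.single a 1, Pi.single b 1] * w b := by
  have hexpand := LinearMap.congr_fun₂ (Matrix.toLinearMap₂'_toMatrix' (R := ℝ)
    (fderiv ℝ (fderiv ℝ f) u).toLinearMap₁₂) v w
  simp only [Matrix.toLinearMap₂'_apply, LinearMap.toMatrix₂'_apply,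
    ContinuousLinearMap.toLinearMap₁₂_apply, LinearMap.coe_comp, ContinuousLinearMap.coe_coe,
    Function.comp_apply, ContinuousLinearMap.coeLMₛₗ_apply, smul_eq_mul] at hexpand
  simp only [iteratedFDeriv_two_apply, Matrix.cons_val_zero, Matrix.cons_val_one, ← hexpand]
  exact sum_congr rfl fun a _ => sum_congr rfl fun b _ => by ring

theorem contDiff_sqnorm {k : WithTop ℕ∞} : ContDiff ℝ k (sqnorm : (ι → ℝ) → ℝ) := by
  unfold sqnorm
  fun_prop

theorem iteratedFDeriv_two_sqnorm_apply (u v w : ι → ℝ) :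
    iteratedFDeriv ℝ 2 sqnorm u ![v, w] = 2 * (v ⬝ᵥ w) := by
  have hterm : ∀ p : ι,
      iteratedFDeriv ℝ 2 (fun x : ι → ℝ => x p ^ 2) u ![v, w] = 2 * (v p * w p) := by
    intro p
    rw [show (fun x : ι → ℝ => x p ^ 2)
        = (fun t : ℝ => t ^ 2) ∘ ContinuousLinearMap.proj (R := ℝ) (φ := fun _ : ι => ℝ) p from rfl,
      ContinuousLinearMap.iteratedFDeriv_comp_right _
        (by fun_prop : ContDiff ℝ 2 fun t : ℝ => t ^ 2) _ le_rfl,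
      ContinuousMultilinearMap.compContinuousLinearMap_apply,
      iteratedFDeriv_apply_eq_iteratedDeriv_mul_prod, iteratedDeriv_pow]
    simp [Fin.prod_univ_two]
    ring
  unfold sqnorm
  rw [iteratedFDeriv_fun_sum_apply (f := fun p (x : ι → ℝ) => x p ^ 2) fun p _ => by fun_prop]
  simp only [_root_.sum_apply, hterm, dotProduct, mul_sum]

end Coordinates

section Averages

theorem card_div_mul_inv_card_mul_sum {ι : Type*} (s : Finset ι) (N : ℝ) (t : ι → ℝ) :
    (s.card : ℝ) / N * ((s.card : ℝ)⁻¹ * ∑ i ∈ s, t i) = N⁻¹ * ∑ i ∈ s, t i := by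
  rcases s.eq_empty_or_nonempty with rfl | hs
  · simp
  · have : (s.card : ℝ) ≠ 0 := by exact_mod_cast hs.card_pos.ne'
    field_simp

theorem card_div_mul_inv_card_mul_sum_add {ι : Type*} (s : Finset ι) (N : ℝ) (t : ι → ℝ)
    (c : ℝ) :
    (s.card : ℝ) / N * ((s.card : ℝ)⁻¹ * ∑ i ∈ s, t i + c) = N⁻¹ * ∑ i ∈ s, (t i + c) := by
  rw [mul_add, card_div_mul_inv_card_mul_sum, sum_add_distrib, sum_const, nsmul_eq_mul]
  ring

theorem inv_mul_sum_union_sub_card_div_mul {ι : Type*} [DecidableEq ι] {s t : Finset ι}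
    (hst : Disjoint s t) (N : ℝ) (g : ι → ℝ) :
    N⁻¹ * ∑ i ∈ s ∪ t, g i - (s.card : ℝ) / N * ((s.card : ℝ)⁻¹ * ∑ i ∈ s, g i)
      = N⁻¹ * ∑ i ∈ t, g i := by
  rw [card_div_mul_inv_card_mul_sum, sum_union hst]
  ring

end Averages

section DualRisk

variable {din dout dθ n : ℕ}
  {f0 : (Fin din → ℝ) → Fin dout → ℝ} {J : (Fin din → ℝ) → Matrix (Fin dout) (Fin dθ) ℝ}
  {θ' : Fin dθ → ℝ} {X : Fin n → Fin din → ℝ} {Y : Fin n → Fin dout → ℝ}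
  {ℓ : (Fin dout → ℝ) → (Fin dout → ℝ) → ℝ} {lam : ℝ} {θstar : Fin dθ → ℝ}

theorem hessloss_eq_iteratedFDeriv_two {y : Fin dout → ℝ} (hℓ : ContDiff ℝ 2 fun u => ℓ u y)
    (u : Fin dout → ℝ) (a b : Fin dout) :
    hessloss ℓ y u a b
      = iteratedFDeriv ℝ 2 (fun u => ℓ u y) u ![Pi.single a 1, Pi.single b 1] :=
  fderiv_fderiv_apply_eq_iteratedFDeriv_two
    ((hℓ.fderiv_right (m := 1) le_rfl).differentiable one_ne_zero u) _ _

theorem KxX_mulVec_single_one (i : Fin n) (q : Fin n × Fin dout) :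
    KxX J X (X i) *ᵥ Pi.single q 1 = fun a => Kmat J X (i, a) q := by
  ext a
  simp [KxX, Kmat, JX, Matrix.mul_apply]

theorem transpose_JX_mulVec_single_one_dotProduct (q q' : Fin n × Fin dout) :
    (JX J X)ᵀ *ᵥ Pi.single q 1 ⬝ᵥ (JX J X)ᵀ *ᵥ Pi.single q' 1 = Kmat J X q q' := by
  simp [Kmat, Matrix.mul_apply, dotProduct]

theorem dualRisk_eq_smul_sum (S : Finset (Fin n)) :
    dualRisk f0 J θ' X Y ℓ lam θstar S = fun β => (S.card : ℝ)⁻¹ • ∑ i ∈ S,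
      (ℓ (flin f0 J θ' (X i) θstar + (KxX J X (X i)).mulVecLin.toContinuousLinearMap β) (Y i)
        + (lam / 2) • sqnorm ((θstar - θ') + (JX J X)ᵀ.mulVecLin.toContinuousLinearMap β)) := by
  funext β
  simp only [dualRisk, glin, phi, smul_eq_mul, LinearMap.coe_toContinuousLinearMap',
    Matrix.mulVecLin_apply, add_sub_right_comm]

theorem contDiff_dualRisk (hℓ : ∀ y, ContDiff ℝ 2 fun u => ℓ u y) (S : Finset (Fin n)) :
    ContDiff ℝ 2 (dualRisk f0 J θ' X Y ℓ lam θstar S) := by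
  rw [dualRisk_eq_smul_sum]
  have := contDiff_sqnorm (ι := Fin dθ) (k := 2)
  fun_prop

theorem iteratedFDeriv_two_dualRisk_apply (hℓ : ∀ y, ContDiff ℝ 2 fun u => ℓ u y)
    (S : Finset (Fin n)) (β v w : Fin n × Fin dout → ℝ) :
    iteratedFDeriv ℝ 2 (dualRisk f0 J θ' X Y ℓ lam θstar S) β ![v, w]
      = (S.card : ℝ)⁻¹ * ∑ i ∈ S,
          (iteratedFDeriv ℝ 2 (fun u => ℓ u (Y i)) (glin f0 J θ' X θstar (X i) β)
              ![KxX J X (X i) *ᵥ v, KxX J X (X i) *ᵥ w]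
            + lam * ((JX J X)ᵀ *ᵥ v ⬝ᵥ (JX J X)ᵀ *ᵥ w)) := by
  have hpair : ∀ {m : Type} [Fintype m] (M : Matrix m (Fin n × Fin dout) ℝ),
      (fun i => M.mulVecLin.toContinuousLinearMap (![v, w] i)) = ![M *ᵥ v, M *ᵥ w] := by
    intro m _ M
    funext i
    fin_cases i <;> rfl
  have hreg : ContDiff ℝ 2 fun β =>
      sqnorm ((θstar - θ') + (JX J X)ᵀ.mulVecLin.toContinuousLinearMap β) := by
    have := contDiff_sqnorm (ι := Fin dθ) (k := 2)
    fun_prop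
  have hloss : ∀ i, ContDiff ℝ 2 fun β =>
      ℓ (flin f0 J θ' (X i) θstar + (KxX J X (X i)).mulVecLin.toContinuousLinearMap β) (Y i) := by
    intro i
    have := hℓ (Y i)
    fun_prop
  rw [dualRisk_eq_smul_sum, iteratedFDeriv_const_smul_apply' (by fun_prop),
    _root_.smul_apply, smul_eq_mul,
    iteratedFDeriv_fun_sum_apply fun i _ => by fun_prop, _root_.sum_apply]
  congr 1
  refine sum_congr rfl fun i _ => ?_
  rw [fun_iteratedFDeriv_add_apply (hloss i).contDiffAt (hreg.const_smul _).contDiffAt,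
    iteratedFDeriv_const_smul_apply' hreg.contDiffAt,
    _root_.add_apply, _root_.smul_apply,
    iteratedFDeriv_comp_affine_apply (hℓ (Y i)), iteratedFDeriv_comp_affine_apply contDiff_sqnorm,
    hpair, hpair, iteratedFDeriv_two_sqnorm_apply, smul_eq_mul]
  simp only [glin, LinearMap.coe_toContinuousLinearMap', Matrix.mulVecLin_apply]
  ring

theorem dualRisk_hessian_apply_single (hℓ : ∀ y, ContDiff ℝ 2 fun u => ℓ u y)
    (S : Finset (Fin n)) (q q' : Fin n × Fin dout) :
    fderiv ℝ (fun β => fderiv ℝ (dualRisk f0 J θ' X Y ℓ lam θstar S) β (Pi.single q' 1)) 0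
        (Pi.single q 1)
      = (S.card : ℝ)⁻¹ * ∑ i ∈ S,
          (∑ a, ∑ b, Kmat J X (i, a) q * hessloss ℓ (Y i) (flin f0 J θ' (X i) θstar) a b *
              Kmat J X (i, b) q'
            + lam * Kmat J X q q') := by
  have hdiff : Differentiable ℝ (fderiv ℝ (dualRisk f0 J θ' X Y ℓ lam θstar S)) :=
    ((contDiff_dualRisk hℓ S).fderiv_right (m := 1) le_rfl).differentiable one_ne_zero
  rw [fderiv_fderiv_apply_eq_iteratedFDeriv_two (hdiff 0),
    iteratedFDeriv_two_dualRisk_apply hℓ]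
  simp only [iteratedFDeriv_two_apply_eq_sum_single, KxX_mulVec_single_one,
    transpose_JX_mulVec_single_one_dotProduct, ← hessloss_eq_iteratedFDeriv_two (hℓ _), glin,
    Matrix.mulVec_zero, add_zero]

end DualRisk

theorem stmt_11_general {din dout dθ n : ℕ}
    (f0 : (Fin din → ℝ) → Fin dout → ℝ)
    (J : (Fin din → ℝ) → Matrix (Fin dout) (Fin dθ) ℝ)
    (θ' : Fin dθ → ℝ) (X : Fin n → Fin din → ℝ) (Y : Fin n → Fin dout → ℝ)
    (ℓ : (Fin dout → ℝ) → (Fin dout → ℝ) → ℝ) (lam : ℝ)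
    (hC2 : ∀ ytgt, ContDiff ℝ 2 fun u => ℓ u ytgt)
    (θstar : Fin dθ → ℝ)
    (Df Dr : Finset (Fin n))
    (hdisj : Disjoint Df Dr) (hunion : Df ∪ Dr = Finset.univ) :
    (fun q q' : Fin n × Fin dout =>
        fderiv ℝ
          (fun β : Fin n × Fin dout → ℝ =>
            fderiv ℝ (dualRisk f0 J θ' X Y ℓ lam θstar Finset.univ) β (Pi.single q' 1))
          (0 : Fin n × Fin dout → ℝ) (Pi.single q 1)
        - (Df.card : ℝ) / n *
          fderiv ℝ
            (fun β : Fin n × Fin dout → ℝ =>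
              fderiv ℝ (dualRisk f0 J θ' X Y ℓ lam θstar Df) β (Pi.single q' 1))
            (0 : Fin n × Fin dout → ℝ) (Pi.single q 1)) =
      fun q q' : Fin n × Fin dout =>
        (Dr.card : ℝ) / n *
          ((∑ i ∈ Dr, ∑ a : Fin dout, ∑ b : Fin dout,
              Kmat J X (i, a) q *
                ((Dr.card : ℝ)⁻¹ * hessloss ℓ (Y i) (flin f0 J θ' (X i) θstar) a b) *
                Kmat J X (i, b) q')
            + lam * Kmat J X q q') := by
  funext q q'
  rw [dualRisk_hessian_apply_single hC2, dualRisk_hessian_apply_single hC2, card_univ,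
    Fintype.card_fin, ← hunion, inv_mul_sum_union_sub_card_div_mul hdisj]
  simp only [mul_left_comm _ (Dr.card : ℝ)⁻¹, mul_assoc (Dr.card : ℝ)⁻¹, ← mul_sum]
  rw [card_div_mul_inv_card_mul_sum_add]

/-- with `D` partitioned into a nonempty forget set `D_f` and a nonempty
retain set `D_r`, the upweighted dual Hessian at `Δα = 0` satisfies
`∇²L̃_D(0) − (|D_f|/|D|) ∇²L̃_{D_f}(0)
  = (|D_r|/|D|) ( K_rᵀ ∇²_{f^lin(X_r, θ̂*)} L̂_{D_r} K_r + λ K )`. -/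
theorem stmt_11 {din dout dθ n : ℕ} (hn : 0 < n)
    (f0 : (Fin din → ℝ) → Fin dout → ℝ)
    (J : (Fin din → ℝ) → Matrix (Fin dout) (Fin dθ) ℝ)
    (θ' : Fin dθ → ℝ) (X : Fin n → Fin din → ℝ) (Y : Fin n → Fin dout → ℝ)
    (ℓ : (Fin dout → ℝ) → (Fin dout → ℝ) → ℝ) (lam : ℝ)
    (hℓ0 : ∀ u ytgt, 0 ≤ ℓ u ytgt)
    (hconv : ∀ ytgt, ConvexOn ℝ Set.univ fun u => ℓ u ytgt)
    (hC2 : ∀ ytgt, ContDiff ℝ 2 fun u => ℓ u ytgt)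
    (hlam : 0 < lam)
    (θstar : Fin dθ → ℝ)
    (hmin : ∀ θ : Fin dθ → ℝ,
      empRisk f0 J θ' X Y ℓ lam Finset.univ θstar ≤ empRisk f0 J θ' X Y ℓ lam Finset.univ θ)
    (Df Dr : Finset (Fin n)) (hDf : Df.Nonempty) (hDr : Dr.Nonempty)
    (hdisj : Disjoint Df Dr) (hunion : Df ∪ Dr = Finset.univ) :
    (fun q q' : Fin n × Fin dout =>
        fderiv ℝ
          (fun β : Fin n × Fin dout → ℝ =>
            fderiv ℝ (dualRisk f0 J θ' X Y ℓ lam θstar Finset.univ) β (Pi.single q' 1))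
          (0 : Fin n × Fin dout → ℝ) (Pi.single q 1)
        - (Df.card : ℝ) / n *
          fderiv ℝ
            (fun β : Fin n × Fin dout → ℝ =>
              fderiv ℝ (dualRisk f0 J θ' X Y ℓ lam θstar Df) β (Pi.single q' 1))
            (0 : Fin n × Fin dout → ℝ) (Pi.single q 1)) =
      fun q q' : Fin n × Fin dout =>
        (Dr.card : ℝ) / n *
          ((∑ i ∈ Dr, ∑ a : Fin dout, ∑ b : Fin dout,
              Kmat J X (i, a) q *
                ((Dr.card : ℝ)⁻¹ * hessloss ℓ (Y i) (flin f0 J θ' (X i) θstar) a b) *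
                Kmat J X (i, b) q')
            + lam * Kmat J X q q') :=
  stmt_11_general f0 J θ' X Y ℓ lam hC2 θstar Df Dr hdisj hunion
end
end

section
/- For any nonempty D_r ⊆ D, let θ̂* and θ̂_r* denote the unique minimizers of L̂_D and L̂_{D_r}, and let Δα_r* ∈ ℝ^{d_out·n} be the vector with top block (1/λ) ∇_{f^lin(X_f, θ̂*)} L̂_D and bottom block −(1/λ)( ∇_{f^lin(X_r, θ̂_r*)} L̂_{D_r} − ∇_{f^lin(X_r, θ̂*)} L̂_D ), where D_f := D \ D_r. Then for every x ∈ ℝ^{d_in}, the exact change in the linearized model output caused by removing D_f is f^lin(x, θ̂_r*) − f^lin(x, θ̂*) = K(x, X) Δα_r*. -/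
open Finset Matrix

noncomputable section

/-!
At a minimiser θ̂ of `L̂_S` every line derivative vanishes, which is the representer identity
`λ (θ̂ - θ') = -J(X)ᵀ ∇_{f^lin(X_S, θ̂)} L̂_S`. Subtracting the identities for `D` and `D_r`
writes `θ̂_r* - θ̂*` as `J(X)ᵀ Δα_r*`, and since `f^lin(x, ·)` is affine with linear part `J(x)`,
the change of output at `x` is `J(x) J(X)ᵀ Δα_r* = K(x, X) Δα_r*`.
-/
section

variable {din dout dθ n : ℕ} (f0 : (Fin din → ℝ) → Fin dout → ℝ)
    (J : (Fin din → ℝ) → Matrix (Fin dout) (Fin dθ) ℝ) (θ' : Fin dθ → ℝ)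
    (X : Fin n → Fin din → ℝ) (Y : Fin n → Fin dout → ℝ)
    (ℓ : (Fin dout → ℝ) → (Fin dout → ℝ) → ℝ) (lam : ℝ)

/-- `∇_{f^lin(X_S, θ)} L̂_S`, extended by zero to the row blocks of `D \ S`. -/
def outputGrad (S : Finset (Fin n)) (θ : Fin dθ → ℝ) : Fin n × Fin dout → ℝ :=
  fun q => if q.1 ∈ S then (S.card : ℝ)⁻¹ * gradloss ℓ (Y q.1) (flin f0 J θ' (X q.1) θ) q.2 else 0

lemma fderiv_apply_eq_gradloss_dotProduct (y u w : Fin dout → ℝ) :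
    fderiv ℝ (fun v => ℓ v y) u w = gradloss ℓ y u ⬝ᵥ w := by
  conv_lhs => rw [← Finset.univ_sum_single w]
  have (a : Fin dout) : Pi.single a (w a) = w a • (Pi.single a 1 : Fin dout → ℝ) := by
    rw [← Pi.single_smul', smul_eq_mul, mul_one]
  simp only [this, map_sum, map_smul, smul_eq_mul, gradloss, dotProduct, mul_comm]

lemma flin_sub_flin (xt : Fin din → ℝ) (θ₁ θ₂ : Fin dθ → ℝ) :
    flin f0 J θ' xt θ₁ - flin f0 J θ' xt θ₂ = J xt *ᵥ (θ₁ - θ₂) := by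
  simp only [flin, add_sub_add_left_eq_sub, ← mulVec_sub, sub_sub_sub_cancel_right]

lemma hasLineDerivAt_loss_flin {y : Fin dout → ℝ} (hdiff : Differentiable ℝ fun u => ℓ u y)
    (xt : Fin din → ℝ) (θ v : Fin dθ → ℝ) :
    HasLineDerivAt ℝ (fun θ => ℓ (flin f0 J θ' xt θ) y)
      (gradloss ℓ y (flin f0 J θ' xt θ) ⬝ᵥ (J xt *ᵥ v)) θ v := by
  have hline : ∀ t : ℝ, flin f0 J θ' xt (θ + t • v) = flin f0 J θ' xt θ + t • (J xt *ᵥ v) := by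
    intro t
    rw [← sub_eq_iff_eq_add', flin_sub_flin, add_sub_cancel_left, mulVec_smul]
  have hpath : HasDerivAt (fun t : ℝ => flin f0 J θ' xt θ + t • (J xt *ᵥ v)) (J xt *ᵥ v) 0 := by
    simpa using ((hasDerivAt_id (0 : ℝ)).smul_const (J xt *ᵥ v)).const_add (flin f0 J θ' xt θ)
  rw [← fderiv_apply_eq_gradloss_dotProduct]
  unfold HasLineDerivAt
  simp only [hline]
  exact (hdiff _).hasFDerivAt.comp_hasDerivAt_of_eq 0 hpath (by simp)

lemma hasLineDerivAt_sqnorm_sub (θ v : Fin dθ → ℝ) :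
    HasLineDerivAt ℝ (fun θ => sqnorm (θ - θ')) (2 * ((θ - θ') ⬝ᵥ v)) θ v := by
  unfold HasLineDerivAt sqnorm
  have (p : Fin dθ) : HasDerivAt (fun t : ℝ => ((θ + t • v - θ') p) ^ 2) (2 * ((θ - θ') p * v p)) 0 := by
    have hfun : (fun t : ℝ => ((θ + t • v - θ') p) ^ 2) = fun t => ((θ - θ') p + t * v p) ^ 2 := by
      funext t; simp only [Pi.sub_apply, Pi.add_apply, Pi.smul_apply, smul_eq_mul]; ring
    rw [hfun]
    exact ((((hasDerivAt_id (0 : ℝ)).mul_const (v p)).const_add ((θ - θ') p)).fun_pow 2).congr_deriv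
      (by simp; ring)
  simpa [dotProduct, Finset.mul_sum] using HasDerivAt.fun_sum (fun p _ => this p)

lemma outputGrad_dotProduct_JX_mulVec (S : Finset (Fin n)) (θ : Fin dθ → ℝ) (v : Fin dθ → ℝ) :
    outputGrad f0 J θ' X Y ℓ S θ ⬝ᵥ (JX J X *ᵥ v)
      = (S.card : ℝ)⁻¹ * ∑ i ∈ S, gradloss ℓ (Y i) (flin f0 J θ' (X i) θ) ⬝ᵥ (J (X i) *ᵥ v) := by
  have hJX (i : Fin n) (a : Fin dout) : (JX J X *ᵥ v) (i, a) = (J (X i) *ᵥ v) a := rfl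
  simp only [dotProduct, Fintype.sum_prod_type, outputGrad, hJX, ite_mul, zero_mul]
  simp only [Finset.mul_sum, mul_assoc, Finset.sum_ite_irrel, Finset.sum_const_zero,
    ← Finset.sum_filter, Finset.filter_univ_mem]

lemma hasLineDerivAt_empRisk (hdiff : ∀ y, Differentiable ℝ fun u => ℓ u y)
    {S : Finset (Fin n)} (hS : S.Nonempty) (θ v : Fin dθ → ℝ) :
    HasLineDerivAt ℝ (empRisk f0 J θ' X Y ℓ lam S)
      (lam * ((θ - θ') ⬝ᵥ v) + outputGrad f0 J θ' X Y ℓ S θ ⬝ᵥ (JX J X *ᵥ v)) θ v := by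
  have hsum := HasDerivAt.fun_sum (u := S) fun i _ =>
    (hasLineDerivAt_loss_flin f0 J θ' ℓ (hdiff (Y i)) (X i) θ v).add
      ((hasLineDerivAt_sqnorm_sub θ' θ v).const_mul (lam / 2))
  refine (hsum.const_mul (S.card : ℝ)⁻¹).congr_deriv ?_
  have hcard : (S.card : ℝ) ≠ 0 := Nat.cast_ne_zero.mpr hS.card_ne_zero
  rw [outputGrad_dotProduct_JX_mulVec, Finset.sum_add_distrib, Finset.sum_const, nsmul_eq_mul]
  field_simp
  ring

lemma empRisk_stationarity (hdiff : ∀ y, Differentiable ℝ fun u => ℓ u y)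
    {S : Finset (Fin n)} (hS : S.Nonempty) {θm : Fin dθ → ℝ}
    (hmin : ∀ θ, empRisk f0 J θ' X Y ℓ lam S θm ≤ empRisk f0 J θ' X Y ℓ lam S θ) :
    lam • (θm - θ') + (JX J X)ᵀ *ᵥ outputGrad f0 J θ' X Y ℓ S θm = 0 := by
  -- Differentiating along the candidate gradient `w` itself yields `w ⬝ᵥ w = 0`.
  set w := lam • (θm - θ') + (JX J X)ᵀ *ᵥ outputGrad f0 J θ' X Y ℓ S θm
  have hzero := IsLocalMin.hasLineDerivAt_eq_zero (Filter.Eventually.of_forall hmin)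
    (hasLineDerivAt_empRisk f0 J θ' X Y ℓ lam hdiff hS θm w)
  rw [dotProduct_mulVec, ← mulVec_transpose, ← smul_eq_mul, ← smul_dotProduct,
    ← add_dotProduct] at hzero
  exact dotProduct_self_eq_zero.mp hzero

lemma dalpha_eq_smul_sub (Dr : Finset (Fin n)) (θstar θrstar : Fin dθ → ℝ) :
    dalpha f0 J θ' X Y ℓ lam Dr θstar θrstar
      = lam⁻¹ • (outputGrad f0 J θ' X Y ℓ Finset.univ θstar - outputGrad f0 J θ' X Y ℓ Dr θrstar) := by
  funext q
  by_cases hq : q.1 ∈ Dr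
  · simp only [dalpha, hq, ↓reduceIte, neg_mul, Pi.smul_apply, Pi.sub_apply, outputGrad, mem_univ,
      card_univ, Fintype.card_fin, smul_eq_mul]
    ring
  · simp [dalpha, outputGrad, hq]

lemma sub_eq_transpose_mulVec_dalpha (hn : 0 < n) (hdiff : ∀ y, Differentiable ℝ fun u => ℓ u y)
    (hlam : lam ≠ 0) {Dr : Finset (Fin n)} (hDr : Dr.Nonempty) {θstar θrstar : Fin dθ → ℝ}
    (hmin : ∀ θ, empRisk f0 J θ' X Y ℓ lam Finset.univ θstar ≤ empRisk f0 J θ' X Y ℓ lam Finset.univ θ)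
    (hminr : ∀ θ, empRisk f0 J θ' X Y ℓ lam Dr θrstar ≤ empRisk f0 J θ' X Y ℓ lam Dr θ) :
    θrstar - θstar = (JX J X)ᵀ *ᵥ dalpha f0 J θ' X Y ℓ lam Dr θstar θrstar := by
  have hstat := empRisk_stationarity f0 J θ' X Y ℓ lam hdiff ⟨⟨0, hn⟩, Finset.mem_univ _⟩ hmin
  have hstatr := empRisk_stationarity f0 J θ' X Y ℓ lam hdiff hDr hminr
  rw [dalpha_eq_smul_sub, mulVec_smul, mulVec_sub, eq_neg_of_add_eq_zero_right hstat,
    eq_neg_of_add_eq_zero_right hstatr, smul_sub, smul_neg, smul_neg, inv_smul_smul₀ hlam,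
    inv_smul_smul₀ hlam]
  abel

end

lemma KxX_mulVec {din dout dθ n : ℕ} (J : (Fin din → ℝ) → Matrix (Fin dout) (Fin dθ) ℝ)
    (X : Fin n → Fin din → ℝ) (xt : Fin din → ℝ) (v : Fin n × Fin dout → ℝ) :
    KxX J X xt *ᵥ v = J xt *ᵥ ((JX J X)ᵀ *ᵥ v) :=
  (mulVec_mulVec _ _ _).symm

theorem stmt_13_general {din dout dθ n : ℕ} (hn : 0 < n)
    (f0 : (Fin din → ℝ) → Fin dout → ℝ)
    (J : (Fin din → ℝ) → Matrix (Fin dout) (Fin dθ) ℝ)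
    (θ' : Fin dθ → ℝ) (X : Fin n → Fin din → ℝ) (Y : Fin n → Fin dout → ℝ)
    (ℓ : (Fin dout → ℝ) → (Fin dout → ℝ) → ℝ) (lam : ℝ)
    (hdiff : ∀ ytgt, Differentiable ℝ fun u => ℓ u ytgt)
    (hlam : 0 < lam)
    (Dr : Finset (Fin n)) (hDr : Dr.Nonempty)
    (θstar θrstar : Fin dθ → ℝ)
    (hmin : ∀ θ : Fin dθ → ℝ,
      empRisk f0 J θ' X Y ℓ lam Finset.univ θstar ≤ empRisk f0 J θ' X Y ℓ lam Finset.univ θ)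
    (hminr : ∀ θ : Fin dθ → ℝ,
      empRisk f0 J θ' X Y ℓ lam Dr θrstar ≤ empRisk f0 J θ' X Y ℓ lam Dr θ) :
    ∀ xt : Fin din → ℝ,
      flin f0 J θ' xt θrstar - flin f0 J θ' xt θstar =
        KxX J X xt *ᵥ dalpha f0 J θ' X Y ℓ lam Dr θstar θrstar := by
  intro xt
  rw [flin_sub_flin, KxX_mulVec,
    sub_eq_transpose_mulVec_dalpha f0 J θ' X Y ℓ lam hn hdiff hlam.ne' hDr hmin hminr]

/-- the exact change in the linearized model output caused by removing
`D_f = D \ D_r` is `f^lin(x, θ̂_r*) − f^lin(x, θ̂*) = K(x, X) Δα_r*` for every test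
input `x`. -/
theorem stmt_13 {din dout dθ n : ℕ} (hn : 0 < n)
    (f0 : (Fin din → ℝ) → Fin dout → ℝ)
    (J : (Fin din → ℝ) → Matrix (Fin dout) (Fin dθ) ℝ)
    (θ' : Fin dθ → ℝ) (X : Fin n → Fin din → ℝ) (Y : Fin n → Fin dout → ℝ)
    (ℓ : (Fin dout → ℝ) → (Fin dout → ℝ) → ℝ) (lam : ℝ)
    (hℓ0 : ∀ u ytgt, 0 ≤ ℓ u ytgt)
    (hconv : ∀ ytgt, ConvexOn ℝ Set.univ fun u => ℓ u ytgt)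
    (hdiff : ∀ ytgt, Differentiable ℝ fun u => ℓ u ytgt)
    (hlam : 0 < lam)
    (Dr : Finset (Fin n)) (hDr : Dr.Nonempty)
    (θstar θrstar : Fin dθ → ℝ)
    (hmin : ∀ θ : Fin dθ → ℝ,
      empRisk f0 J θ' X Y ℓ lam Finset.univ θstar ≤ empRisk f0 J θ' X Y ℓ lam Finset.univ θ)
    (hminr : ∀ θ : Fin dθ → ℝ,
      empRisk f0 J θ' X Y ℓ lam Dr θrstar ≤ empRisk f0 J θ' X Y ℓ lam Dr θ) :
    ∀ xt : Fin din → ℝ,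
      flin f0 J θ' xt θrstar - flin f0 J θ' xt θstar =
        KxX J X xt *ᵥ dalpha f0 J θ' X Y ℓ lam Dr θstar θrstar :=
  stmt_13_general hn f0 J θ' X Y ℓ lam hdiff hlam Dr hDr θstar θrstar hmin hminr
end
end
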